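/- arXiv:2112.13751 — 3 statements merged into one kernel-verified Lean document; each statement's English description precedes it below -/
import Mathlib

section
/- Let A be a randomized algorithm mapping finite subsets of V to probability measures on Ω that is (ε,δ)-differentially private (ε ≥ 0, δ ≥ 0), and let 0 < ξ < 1. Then the subsampled algorithm A' is (ε′,δ′)-differentially private, where ε′ = ln max{ ξ(e^ε − 1) + 1, (ξ(e^{−ε} − 1) + 1)^{−1} } and δ′ = max{ e^{−ε}δξ/(ξ(e^{−ε} − 1) + 1), δξ }: that is, for every finite D ⊆ V, every x ∈ V \ D, and every measurable C ⊆ Ω, both Pr[A'(D ∪ {x}) ∈ C] ≤ e^{ε′}·Pr[A'(D) ∈ C] + δ′ and Pr[A'(D) ∈ C] ≤ e^{ε′}·Pr[A'(D ∪ {x}) ∈ C] + δ′ hold. -/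
open Finset MeasureTheory

/-- `Pr[A'(D) ∈ C]` for the subsampled algorithm `A'` that includes each element of `D`
independently with probability `ξ` and runs `A` on the resulting subset. -/
noncomputable def subPr {V Ω : Type*} [MeasurableSpace Ω]
    (A : Finset V → Measure Ω) (ξ : ℝ) (D : Finset V) (C : Set Ω) : ℝ :=
  ∑ S ∈ D.powerset, ξ ^ S.card * (1 - ξ) ^ (D.card - S.card) * (A S C).toReal

lemma sum_powerset_insert_split {V : Type*} [DecidableEq V] (ξ : ℝ)
    (f : Finset V → ℝ) {D : Finset V} {x : V} (hx : x ∉ D) :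
    ∑ S ∈ (insert x D).powerset,
        ξ ^ S.card * (1 - ξ) ^ ((insert x D).card - S.card) * f S
      = ∑ S ∈ D.powerset,
        ξ ^ S.card * (1 - ξ) ^ (D.card - S.card)
          * ((1 - ξ) * f S + ξ * f (insert x S)) := by
  have hdisj : Disjoint D.powerset (D.powerset.image (insert x)) := by
    rw [Finset.disjoint_right]
    intro S hS hS'
    simp only [Finset.mem_image, Finset.mem_powerset] at hS hS'
    obtain ⟨T, hT, rfl⟩ := hS
    exact hx (hS' (Finset.mem_insert_self x T))
  rw [Finset.powerset_insert, Finset.sum_union hdisj, Finset.sum_image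
    (fun a ha b hb h => by
      simp only [Finset.mem_coe, Finset.mem_powerset] at ha hb
      have hxa : x ∉ a := fun h' => hx (ha h')
      have hxb : x ∉ b := fun h' => hx (hb h')
      rw [← Finset.erase_insert hxa, ← Finset.erase_insert hxb, h])]
  rw [Finset.card_insert_of_notMem hx]
  have h1 : ∀ S ∈ D.powerset,
      ξ ^ S.card * (1 - ξ) ^ (D.card + 1 - S.card) * f S
        = ξ ^ S.card * (1 - ξ) ^ (D.card - S.card) * ((1 - ξ) * f S) := by
    intro S hS
    rw [Finset.mem_powerset] at hS
    have hcard : S.card ≤ D.card := Finset.card_le_card hS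
    rw [show D.card + 1 - S.card = (D.card - S.card) + 1 by omega, pow_succ]
    ring
  have h2 : ∀ S ∈ D.powerset,
      ξ ^ (insert x S).card * (1 - ξ) ^ (D.card + 1 - (insert x S).card) * f (insert x S)
        = ξ ^ S.card * (1 - ξ) ^ (D.card - S.card) * (ξ * f (insert x S)) := by
    intro S hS
    rw [Finset.mem_powerset] at hS
    have hxS : x ∉ S := fun h' => hx (hS h')
    have hcard : S.card ≤ D.card := Finset.card_le_card hS
    rw [Finset.card_insert_of_notMem hxS,
      show D.card + 1 - (S.card + 1) = D.card - S.card by omega, pow_succ]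
    ring
  rw [Finset.sum_congr rfl h1, Finset.sum_congr rfl h2, ← Finset.sum_add_distrib]
  exact Finset.sum_congr rfl fun S _ => by ring

lemma weight_sum_one {V : Type*} [DecidableEq V] (ξ : ℝ) (D : Finset V) :
    ∑ S ∈ D.powerset, ξ ^ S.card * (1 - ξ) ^ (D.card - S.card) = 1 := by
  induction D using Finset.induction_on with
  | empty => simp
  | insert _ _ hx ih =>
    have h := sum_powerset_insert_split ξ (fun _ => (1 : ℝ)) hx
    simp only [mul_one] at h
    rw [h]
    have h1 : (1 : ℝ) - ξ + ξ = 1 := by ring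
    rw [h1]
    simp only [mul_one]
    exact ih

theorem subsampled_is_DP {V Ω : Type*} [DecidableEq V] [MeasurableSpace Ω]
    (A : Finset V → Measure Ω)
    (hA : ∀ S : Finset V, IsProbabilityMeasure (A S))
    (ξ ε δ : ℝ) (hξ0 : 0 < ξ) (hξ1 : ξ < 1) (hε : 0 ≤ ε) (hδ : 0 ≤ δ)
    (hDP : ∀ S : Finset V, ∀ y : V, y ∉ S → ∀ C : Set Ω, MeasurableSet C →
      ((A (insert y S)) C).toReal ≤ Real.exp ε * ((A S) C).toReal + δ ∧
      ((A S) C).toReal ≤ Real.exp ε * ((A (insert y S)) C).toReal + δ)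
    (ε' δ' : ℝ)
    (hε' : ε' = Real.log
      (max (ξ * (Real.exp ε - 1) + 1) (ξ * (Real.exp (-ε) - 1) + 1)⁻¹))
    (hδ' : δ' = max (Real.exp (-ε) * δ * ξ / (ξ * (Real.exp (-ε) - 1) + 1)) (δ * ξ)) :
    ∀ D : Finset V, ∀ x : V, x ∉ D → ∀ C : Set Ω, MeasurableSet C →
      subPr A ξ (insert x D) C ≤ Real.exp ε' * subPr A ξ D C + δ' ∧
      subPr A ξ D C ≤ Real.exp ε' * subPr A ξ (insert x D) C + δ' := by
  intro D x hx C hC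
  set a := ξ * (Real.exp ε - 1) + 1 with ha_def
  set b := ξ * (Real.exp (-ε) - 1) + 1 with hb_def
  have hexp1 : 1 ≤ Real.exp ε := Real.one_le_exp hε
  have hprod : Real.exp (-ε) * Real.exp ε = 1 := by
    rw [← Real.exp_add]; simp
  have hepos : 0 < Real.exp (-ε) := Real.exp_pos _
  have hexpneg : Real.exp (-ε) ≤ 1 := by nlinarith
  have h1ξ : 0 < 1 - ξ := by linarith
  have ha1 : 1 ≤ a := by nlinarith
  have hb0 : 0 < b := by nlinarith
  have hE : Real.exp ε' = max a b⁻¹ := by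
    rw [hε', Real.exp_log (lt_of_lt_of_le one_pos (le_trans ha1 (le_max_left _ _)))]
  have hEa : a ≤ Real.exp ε' := hE ▸ le_max_left _ _
  have hEb : b⁻¹ ≤ Real.exp ε' := hE ▸ le_max_right _ _
  have hδ1 : δ * ξ ≤ δ' := hδ' ▸ le_max_right _ _
  have hδ2 : Real.exp (-ε) * δ * ξ / b ≤ δ' := hδ' ▸ le_max_left _ _
  have hw : ∀ S : Finset V, 0 ≤ ξ ^ S.card * (1 - ξ) ^ (D.card - S.card) :=
    fun S => by positivity
  have hp : ∀ S : Finset V, 0 ≤ (A S C).toReal := fun S => ENNReal.toReal_nonneg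
  have hsplit := sum_powerset_insert_split ξ (fun S => (A S C).toReal) hx
  have hP0 : 0 ≤ subPr A ξ D C :=
    Finset.sum_nonneg fun S _ => mul_nonneg (hw S) (hp S)
  have hP0' : 0 ≤ subPr A ξ (insert x D) C :=
    Finset.sum_nonneg fun S _ => mul_nonneg (by positivity) (hp S)
  have key1 : subPr A ξ (insert x D) C ≤ a * subPr A ξ D C + ξ * δ := by
    calc subPr A ξ (insert x D) C
        = ∑ S ∈ D.powerset, ξ ^ S.card * (1 - ξ) ^ (D.card - S.card)
            * ((1 - ξ) * (A S C).toReal + ξ * (A (insert x S) C).toReal) := hsplit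
      _ ≤ ∑ S ∈ D.powerset, ξ ^ S.card * (1 - ξ) ^ (D.card - S.card)
            * (a * (A S C).toReal + ξ * δ) := by
          refine Finset.sum_le_sum fun S hS => ?_
          rw [Finset.mem_powerset] at hS
          have hxS : x ∉ S := fun h' => hx (hS h')
          obtain ⟨hd1, hd2⟩ := hDP S x hxS C hC
          refine mul_le_mul_of_nonneg_left ?_ (hw S)
          nlinarith [hp S, hp (insert x S)]
      _ = a * (∑ S ∈ D.powerset, ξ ^ S.card * (1 - ξ) ^ (D.card - S.card)
            * (A S C).toReal)
          + ξ * δ * (∑ S ∈ D.powerset, ξ ^ S.card * (1 - ξ) ^ (D.card - S.card)) := by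
          rw [Finset.mul_sum, Finset.mul_sum, ← Finset.sum_add_distrib]
          exact Finset.sum_congr rfl fun S _ => by ring
      _ = a * subPr A ξ D C + ξ * δ := by rw [weight_sum_one, subPr]; ring
  have key2 : b * subPr A ξ D C - ξ * (Real.exp (-ε) * δ)
      ≤ subPr A ξ (insert x D) C := by
    calc b * subPr A ξ D C - ξ * (Real.exp (-ε) * δ)
        = b * (∑ S ∈ D.powerset, ξ ^ S.card * (1 - ξ) ^ (D.card - S.card)
            * (A S C).toReal)
          - ξ * (Real.exp (-ε) * δ)
            * (∑ S ∈ D.powerset, ξ ^ S.card * (1 - ξ) ^ (D.card - S.card)) := by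
          rw [weight_sum_one, subPr]; ring
      _ = ∑ S ∈ D.powerset, ξ ^ S.card * (1 - ξ) ^ (D.card - S.card)
            * (b * (A S C).toReal - ξ * (Real.exp (-ε) * δ)) := by
          rw [Finset.mul_sum, Finset.mul_sum, ← Finset.sum_sub_distrib]
          exact Finset.sum_congr rfl fun S _ => by ring
      _ ≤ ∑ S ∈ D.powerset, ξ ^ S.card * (1 - ξ) ^ (D.card - S.card)
            * ((1 - ξ) * (A S C).toReal + ξ * (A (insert x S) C).toReal) := by
          refine Finset.sum_le_sum fun S hS => ?_
          rw [Finset.mem_powerset] at hS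
          have hxS : x ∉ S := fun h' => hx (hS h')
          obtain ⟨hd1, hd2⟩ := hDP S x hxS C hC
          refine mul_le_mul_of_nonneg_left ?_ (hw S)
          have hq : Real.exp (-ε) * (((A S) C).toReal - δ)
              ≤ ((A (insert x S)) C).toReal := by
            have h5 := mul_le_mul_of_nonneg_left hd2 hepos.le
            calc Real.exp (-ε) * (((A S) C).toReal - δ)
                ≤ Real.exp (-ε) * (Real.exp ε * ((A (insert x S)) C).toReal + δ)
                  - Real.exp (-ε) * δ := by nlinarith
              _ = (Real.exp (-ε) * Real.exp ε) * ((A (insert x S)) C).toReal := by ring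
              _ = ((A (insert x S)) C).toReal := by rw [hprod, one_mul]
          rw [hb_def]
          nlinarith [mul_le_mul_of_nonneg_left hq hξ0.le, hp S]
      _ = subPr A ξ (insert x D) C := hsplit.symm
  constructor
  · have h1 : a * subPr A ξ D C ≤ Real.exp ε' * subPr A ξ D C :=
      mul_le_mul_of_nonneg_right hEa hP0
    nlinarith
  · have h2 : subPr A ξ D C
        ≤ b⁻¹ * subPr A ξ (insert x D) C + Real.exp (-ε) * δ * ξ / b := by
      have h3 := mul_le_mul_of_nonneg_left (sub_le_iff_le_add.mp key2) (inv_nonneg.mpr hb0.le)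
      calc subPr A ξ D C
          = b⁻¹ * (b * subPr A ξ D C) := (inv_mul_cancel_left₀ hb0.ne' _).symm
        _ ≤ b⁻¹ * (subPr A ξ (insert x D) C + ξ * (Real.exp (-ε) * δ)) := h3
        _ = b⁻¹ * subPr A ξ (insert x D) C + Real.exp (-ε) * δ * ξ / b := by
            rw [mul_add, div_eq_mul_inv]; ring
    have h4 : b⁻¹ * subPr A ξ (insert x D) C
        ≤ Real.exp ε' * subPr A ξ (insert x D) C :=
      mul_le_mul_of_nonneg_right hEb hP0'
    linarith
end

section
/- Let (V,d) be a finite metric space with diameter at most M, D ⊆ V nonempty, k ≥ 1, α ≥ 1, β > 0, γ ≥ 0, and let S = (X_1,…,X_s) be s independent uniform samples from D. Let C_b ⊆ V with |C_b| = k be any fixed (α + 3β, γ)-bad solution for the k-means problem on D, i.e. cost^mean_avg(D, C_b) > (α + 3β)·mean_avg(D,k) + γ. Then Pr[ cost^mean_avg(S, C_b) ≤ (α + β)·mean_avg(D,k) + γ ] ≤ exp( −2·s·β²·(mean_avg(D,k))² / M⁴ ). -/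
set_option maxHeartbeats 1000000


open Finset

/-- Average k-means cost of clustering `C` on the finite set `U`. -/
noncomputable def costMeanAvg {V : Type*} [MetricSpace V] (U C : Finset V) : ℝ :=
  (∑ v ∈ U, Metric.infDist v (C : Set V) ^ 2) / U.card

/-- Optimal average k-means cost `med_avg(D, k)`. -/
noncomputable def meanAvg (V : Type*) [MetricSpace V] (D : Finset V) (k : ℕ) : ℝ :=
  sInf {y : ℝ | ∃ C : Finset V, C.card = k ∧
    y = ∑ x ∈ D, Metric.infDist x (C : Set V) ^ 2} / D.card

/-- Average k-means cost of clustering `C` on the sample `f = (X_1, …, X_s)`. -/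
noncomputable def sampleCostMean {V : Type*} [MetricSpace V] {D : Finset V} {s : ℕ}
    (f : Fin s → {x // x ∈ D}) (C : Finset V) : ℝ :=
  (∑ i, Metric.infDist (f i : V) (C : Set V) ^ 2) / s

/-- Probability of the event `P` under `s` independent uniform samples from `D`,
i.e. under the uniform distribution on `Fin s → D`. -/
noncomputable def samplePr {V : Type*} (D : Finset V) (s : ℕ)
    (P : (Fin s → {x // x ∈ D}) → Prop) : ℝ :=
  (Nat.card {f : Fin s → {x // x ∈ D} // P f} : ℝ) / ((D.card : ℝ) ^ s)

lemma exp_le_quadratic {x : ℝ} (h : |x| ≤ 1) : Real.exp x ≤ 1 + x + (3/4) * x ^ 2 := by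
  have := Real.exp_bound h (n := 2) (by norm_num)
  have h2 : |Real.exp x - (1 + x)| ≤ |x| ^ 2 * (3 / 4) := by
    convert this using 2
    · simp [Finset.sum_range_succ]
    · norm_num
  have h3 := abs_le.mp h2
  have hx2 : |x| ^ 2 = x ^ 2 := sq_abs x
  nlinarith [h3.2]

lemma samplePr_le_one {V : Type*} (D : Finset V) (hD : D.Nonempty) (s : ℕ)
    (P : (Fin s → {x // x ∈ D}) → Prop) : samplePr D s P ≤ 1 := by
  classical
  have hn : (0:ℝ) < (D.card : ℝ) ^ s := by
    have : 0 < D.card := Finset.card_pos.mpr hD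
    positivity
  rw [samplePr, div_le_one hn]
  have h1 : Nat.card {f : Fin s → {x // x ∈ D} // P f}
      ≤ Nat.card (Fin s → {x // x ∈ D}) := by
    rw [Nat.card_eq_fintype_card, Nat.card_eq_fintype_card]
    exact Fintype.card_subtype_le _
  have h2 : Nat.card (Fin s → {x // x ∈ D}) = D.card ^ s := by
    rw [Nat.card_eq_fintype_card, Fintype.card_fun, Fintype.card_coe, Fintype.card_fin]
  calc (Nat.card {f : Fin s → {x // x ∈ D} // P f} : ℝ)
      ≤ (Nat.card (Fin s → {x // x ∈ D}) : ℝ) := by exact_mod_cast h1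
    _ = (D.card : ℝ) ^ s := by rw [h2]; push_cast; ring

theorem bad_kmeans_solution_stays_bad_on_sample
    {V : Type*} [MetricSpace V] [Fintype V]
    (M : ℝ) (hdiam : ∀ u v : V, dist u v ≤ M)
    (D : Finset V) (hD : D.Nonempty)
    (k : ℕ) (hk : 1 ≤ k)
    (α β γ : ℝ) (hα : 1 ≤ α) (hβ : 0 < β) (hγ : 0 ≤ γ)
    (s : ℕ)
    (Cb : Finset V) (hCcard : Cb.card = k)
    (hbad : costMeanAvg D Cb > (α + 3 * β) * meanAvg V D k + γ) :
    samplePr D s (fun f => sampleCostMean f Cb ≤ (α + β) * meanAvg V D k + γ) ≤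
      Real.exp (-(2 * (s : ℝ) * β ^ 2 * (meanAvg V D k) ^ 2) / M ^ 4) := by
  classical
  set m := meanAvg V D k with hm_def
  set g : V → ℝ := fun v => Metric.infDist v (Cb : Set V) ^ 2 with hg_def
  have hg0 : ∀ v, 0 ≤ g v := fun v => sq_nonneg _
  have hncard : 0 < D.card := Finset.card_pos.mpr hD
  have hn : (0:ℝ) < (D.card : ℝ) := by exact_mod_cast hncard
  -- M ≥ 0
  obtain ⟨x₀, hx₀⟩ := id hD
  have hM0 : 0 ≤ M := le_trans dist_nonneg (hdiam x₀ x₀)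
  -- Cb nonempty, infDist bounds
  have hCbne : Cb.Nonempty := Finset.card_pos.mp (hCcard ▸ hk)
  obtain ⟨c₀, hc₀⟩ := hCbne
  have hinfM : ∀ v : V, Metric.infDist v (Cb : Set V) ≤ M :=
    fun v => le_trans (Metric.infDist_le_dist_of_mem (by exact_mod_cast hc₀)) (hdiam v c₀)
  have hinf0 : ∀ v : V, 0 ≤ Metric.infDist v (Cb : Set V) := fun v => Metric.infDist_nonneg
  have hgM : ∀ v, g v ≤ M ^ 2 := by
    intro v
    simpa [hg_def] using pow_le_pow_left₀ (hinf0 v) (hinfM v) 2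
  -- m ≥ 0
  have hSlb : ∀ y ∈ {y : ℝ | ∃ C : Finset V, C.card = k ∧
      y = ∑ x ∈ D, Metric.infDist x (C : Set V) ^ 2}, (0:ℝ) ≤ y := by
    rintro y ⟨C, -, rfl⟩
    exact Finset.sum_nonneg fun x _ => sq_nonneg _
  have hm0 : 0 ≤ m := by
    rw [hm_def, meanAvg]
    exact div_nonneg (Real.sInf_nonneg hSlb) hn.le
  -- trivial case
  by_cases hm : m = 0
  · have : Real.exp (-(2 * (s : ℝ) * β ^ 2 * m ^ 2) / M ^ 4) = 1 := by
      simp [hm]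
    rw [this]
    exact samplePr_le_one D hD s _
  have hmpos : 0 < m := lt_of_le_of_ne hm0 (Ne.symm hm)
  -- M > 0
  have hMpos : 0 < M := by
    have hmem : (∑ x ∈ D, Metric.infDist x (Cb : Set V) ^ 2) ∈ {y : ℝ | ∃ C : Finset V,
        C.card = k ∧ y = ∑ x ∈ D, Metric.infDist x (C : Set V) ^ 2} := ⟨Cb, hCcard, rfl⟩
    have hle : sInf {y : ℝ | ∃ C : Finset V, C.card = k ∧
        y = ∑ x ∈ D, Metric.infDist x (C : Set V) ^ 2}
        ≤ ∑ x ∈ D, Metric.infDist x (Cb : Set V) ^ 2 :=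
      csInf_le ⟨0, fun y hy => hSlb y hy⟩ hmem
    have hsInfpos : 0 < sInf {y : ℝ | ∃ C : Finset V, C.card = k ∧
        y = ∑ x ∈ D, Metric.infDist x (C : Set V) ^ 2} := by
      by_contra h
      push_neg at h
      have : m ≤ 0 := by
        rw [hm_def, meanAvg]
        exact div_nonpos_of_nonpos_of_nonneg h hn.le
      linarith
    have hsum_pos : 0 < ∑ x ∈ D, g x := lt_of_lt_of_le hsInfpos hle
    have hsum_le : ∑ x ∈ D, g x ≤ D.card * M ^ 2 := by
      calc ∑ x ∈ D, g x ≤ ∑ _x ∈ D, M ^ 2 := Finset.sum_le_sum fun x _ => hgM x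
        _ = D.card * M ^ 2 := by rw [Finset.sum_const, nsmul_eq_mul]
    have hM2pos : 0 < M ^ 2 := by nlinarith
    nlinarith [hM2pos, hM0]
  have hM2 : (0:ℝ) < M ^ 2 := by positivity
  have hM4 : (0:ℝ) < M ^ 4 := by positivity
  -- set μ and a
  set μ : ℝ := costMeanAvg D Cb with hμ_def
  set a : ℝ := (α + β) * m + γ with ha_def
  have ha0 : 0 ≤ a := by nlinarith
  set t' : ℝ := μ - a with ht'_def
  have htlt : 2 * β * m < t' := by
    have : μ > (α + 3*β) * m + γ := hbad
    rw [ht'_def, ha_def]; nlinarith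
  have ht'pos : 0 < t' := by nlinarith
  have hμsum : ∑ x ∈ D, g x = D.card * μ := by
    rw [hμ_def, costMeanAvg]
    field_simp
    rfl
  have hμ0 : 0 ≤ μ := by
    rw [hμ_def, costMeanAvg]
    exact div_nonneg (Finset.sum_nonneg fun x _ => sq_nonneg _) hn.le
  have hμM : μ ≤ M ^ 2 := by
    have hsum_le : ∑ x ∈ D, g x ≤ D.card * M ^ 2 := by
      calc ∑ x ∈ D, g x ≤ ∑ _x ∈ D, M ^ 2 := Finset.sum_le_sum fun x _ => hgM x
        _ = D.card * M ^ 2 := by rw [Finset.sum_const, nsmul_eq_mul]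
    nlinarith [hμsum]
  have ht'μ : t' ≤ μ := by rw [ht'_def]; linarith
  have ht'M : t' ≤ M ^ 2 := le_trans ht'μ hμM
  clear_value t' a μ m
  -- choose lambda
  obtain ⟨L, hL0, hLM, key⟩ : ∃ L : ℝ, 0 < L ∧ L * M ^ 2 ≤ 1 ∧
      2 * β ^ 2 * m ^ 2 / M ^ 4 ≤ L * t' - (3/16) * L ^ 2 * M ^ 4 := by
    by_cases hcase : t' ≤ (3/8) * M ^ 2
    · refine ⟨8 * t' / (3 * M ^ 4), by positivity, ?_, ?_⟩
      · rw [div_mul_eq_mul_div, div_le_one (by positivity)]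
        nlinarith
      · have hβm : 0 ≤ β * m := mul_nonneg hβ.le hm0
        have heq : 8 * t' / (3 * M ^ 4) * t' - 3/16 * (8 * t' / (3 * M ^ 4)) ^ 2 * M ^ 4
            = (4/3) * t' ^ 2 / M ^ 4 := by
          field_simp
          ring
        rw [heq, div_le_div_iff₀ hM4 hM4]
        nlinarith [mul_nonneg (by linarith : (0:ℝ) ≤ t' - 2*β*m)
            (by linarith : (0:ℝ) ≤ t' + 2*β*m),
          mul_nonneg (sq_nonneg t') hM4.le, hM4]
    · refine ⟨1 / M ^ 2, by positivity, by field_simp; exact le_rfl, ?_⟩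
      have hβm : 0 ≤ β * m := mul_nonneg hβ.le hm0
      rw [div_le_iff₀ hM4]
      have h1 : (3:ℝ)/8 * M ^ 2 < t' := lt_of_not_ge hcase
      have h2 : (1 / M ^ 2 * t' - 3/16 * (1 / M ^ 2) ^ 2 * M ^ 4) * M ^ 4
          = t' * M ^ 2 - 3/16 * M ^ 4 := by field_simp
      rw [h2]
      nlinarith [mul_nonneg (sub_nonneg.mpr ht'M) (by linarith : (0:ℝ) ≤ t' - 3/8 * M ^ 2),
        mul_nonneg (by linarith : (0:ℝ) ≤ t' - 2*β*m) (by linarith : (0:ℝ) ≤ t' + 2*β*m),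
        mul_nonneg ht'pos.le hM2.le]
  obtain ⟨c, hc_def⟩ : ∃ c : ℝ, c = (3/16) * L ^ 2 * M ^ 4 := ⟨_, rfl⟩
  have hc0 : 0 ≤ c := by rw [hc_def]; positivity
  -- per-point MGF bound
  have habs : ∀ v : V, |L * (μ - g v)| ≤ 1 := by
    intro v
    rw [abs_mul, abs_of_pos hL0]
    have h1 : |μ - g v| ≤ M ^ 2 :=
      abs_le.mpr ⟨by nlinarith [hgM v, hμ0], by nlinarith [hg0 v, hμM]⟩
    calc L * |μ - g v| ≤ L * M ^ 2 := mul_le_mul_of_nonneg_left h1 hL0.le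
      _ ≤ 1 := hLM
  have hpoint : ∀ v : V, Real.exp (L * (μ - g v))
      ≤ 1 + L * (μ - g v) + (3/4) * L ^ 2 * (μ - g v) ^ 2 := by
    intro v
    calc Real.exp (L * (μ - g v)) ≤ 1 + L * (μ - g v) + (3/4) * (L * (μ - g v)) ^ 2 :=
          exp_le_quadratic (habs v)
      _ = 1 + L * (μ - g v) + (3/4) * L ^ 2 * (μ - g v) ^ 2 := by ring
  -- variance bound
  have hvar : ∑ x ∈ D, (μ - g x) ^ 2 ≤ D.card * (M ^ 4 / 4) := by
    have e0 : ∀ x : V, (μ - g x) ^ 2 = μ ^ 2 - 2 * μ * g x + g x * g x := fun x => by ring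
    have e1 : ∑ x ∈ D, (μ - g x) ^ 2
        = D.card * μ ^ 2 - 2 * μ * (∑ x ∈ D, g x) + ∑ x ∈ D, g x * g x := by
      simp_rw [e0]
      rw [Finset.sum_add_distrib, Finset.sum_sub_distrib, Finset.sum_const, ← Finset.mul_sum,
        nsmul_eq_mul]
    have e2 : ∑ x ∈ D, g x * g x ≤ M ^ 2 * ∑ x ∈ D, g x := by
      rw [Finset.mul_sum]
      exact Finset.sum_le_sum fun x _ => mul_le_mul_of_nonneg_right (hgM x) (hg0 x)
    rw [e1]
    nlinarith [hμsum, hn, sq_nonneg (M ^ 2 - 2 * μ), e2]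
  -- bound on the sum of exponentials
  have hsumexp : ∑ x ∈ D, Real.exp (L * (μ - g x)) ≤ D.card * (1 + c) := by
    have h1 : ∑ x ∈ D, Real.exp (L * (μ - g x))
        ≤ ∑ x ∈ D, (1 + L * (μ - g x) + (3/4) * L ^ 2 * (μ - g x) ^ 2) :=
      Finset.sum_le_sum fun x _ => hpoint x
    have h2 : ∑ x ∈ D, (1 + L * (μ - g x) + (3/4) * L ^ 2 * (μ - g x) ^ 2)
        = D.card + L * (D.card * μ - ∑ x ∈ D, g x)
          + (3/4) * L ^ 2 * ∑ x ∈ D, (μ - g x) ^ 2 := by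
      rw [Finset.sum_add_distrib, Finset.sum_add_distrib, ← Finset.mul_sum, ← Finset.mul_sum,
        Finset.sum_sub_distrib, Finset.sum_const, Finset.sum_const, nsmul_eq_mul, nsmul_eq_mul,
        mul_one]
    rw [hμsum] at h2
    calc ∑ x ∈ D, Real.exp (L * (μ - g x))
        ≤ ∑ x ∈ D, (1 + L * (μ - g x) + (3/4) * L ^ 2 * (μ - g x) ^ 2) := h1
      _ = (D.card : ℝ) + L * ((D.card : ℝ) * μ - (D.card : ℝ) * μ)
          + (3/4) * L ^ 2 * ∑ x ∈ D, (μ - g x) ^ 2 := h2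
      _ ≤ (D.card : ℝ) * (1 + c) := by rw [hc_def]; nlinarith [hvar, sq_nonneg L]
  -- the event and counting
  set P : (Fin s → {x // x ∈ D}) → Prop := fun f => sampleCostMean f Cb ≤ a with hP_def
  have hscm : ∀ f : Fin s → {x // x ∈ D},
      sampleCostMean f Cb = (∑ i, g ((f i : V))) / s := fun f => rfl
  have hPsum : ∀ f : Fin s → {x // x ∈ D}, P f → ∑ i, g ((f i : V)) ≤ s * a := by
    intro f hf
    have hf' : (∑ i, g ((f i : V))) / (s : ℝ) ≤ a := by rw [← hscm f]; exact hf
    rcases Nat.eq_zero_or_pos s with hs | hs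
    · subst hs
      simp
    · have hs' : (0:ℝ) < s := by exact_mod_cast hs
      rw [div_le_iff₀ hs'] at hf'
      linarith [hf']
  have hcount : (Nat.card {f : Fin s → {x // x ∈ D} // P f} : ℝ)
      = ((Finset.univ.filter P).card : ℝ) := by
    rw [Nat.card_eq_fintype_card, Fintype.card_subtype]
  -- main Chernoff chain
  have hchain : ((Finset.univ.filter P).card : ℝ) * Real.exp (L * (s * t'))
      ≤ ((D.card : ℝ) * (1 + c)) ^ s := by
    have step1 : ((Finset.univ.filter P).card : ℝ) * Real.exp (L * (s * t'))
        = ∑ _f ∈ Finset.univ.filter P, Real.exp (L * (s * t')) := by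
      rw [Finset.sum_const, nsmul_eq_mul]
    have step2 : ∑ _f ∈ Finset.univ.filter P, Real.exp (L * (s * t'))
        ≤ ∑ f ∈ Finset.univ.filter P, Real.exp (L * (s * μ - ∑ i, g ((f i : V)))) := by
      refine Finset.sum_le_sum fun f hf => Real.exp_le_exp.mpr ?_
      have h1 := hPsum f (Finset.mem_filter.mp hf).2
      have h2 : (s:ℝ) * t' ≤ s * μ - ∑ i, g ((f i : V)) := by
        have : t' = μ - a := ht'_def
        nlinarith [Nat.cast_nonneg (α := ℝ) s, h1]
      exact mul_le_mul_of_nonneg_left h2 hL0.le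
    have step3 : ∑ f ∈ Finset.univ.filter P, Real.exp (L * (s * μ - ∑ i, g ((f i : V))))
        ≤ ∑ f : Fin s → {x // x ∈ D}, Real.exp (L * (s * μ - ∑ i, g ((f i : V)))) :=
      Finset.sum_le_sum_of_subset_of_nonneg (Finset.filter_subset _ _)
        fun f _ _ => (Real.exp_pos _).le
    have step4 : ∑ f : Fin s → {x // x ∈ D}, Real.exp (L * (s * μ - ∑ i, g ((f i : V))))
        = ∑ f : Fin s → {x // x ∈ D}, ∏ i, Real.exp (L * (μ - g ((f i : V)))) := by
      refine Finset.sum_congr rfl fun f _ => ?_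
      rw [← Real.exp_sum]
      congr 1
      rw [← Finset.mul_sum]
      congr 1
      rw [Finset.sum_sub_distrib, Finset.sum_const, Finset.card_univ, Fintype.card_fin,
        nsmul_eq_mul]
    have step5 : ∑ f : Fin s → {x // x ∈ D}, ∏ i, Real.exp (L * (μ - g ((f i : V))))
        = (∑ x ∈ D, Real.exp (L * (μ - g x))) ^ s := by
      rw [← Finset.sum_coe_sort D (fun x => Real.exp (L * (μ - g x)))]
      have h := Finset.prod_univ_sum (fun _ : Fin s => (Finset.univ : Finset {x // x ∈ D}))
        (fun _ x => Real.exp (L * (μ - g (x : V))))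
      rw [Fintype.piFinset_univ] at h
      rw [← h, Finset.prod_const, Finset.card_univ, Fintype.card_fin]
    have step6 : (∑ x ∈ D, Real.exp (L * (μ - g x))) ^ s ≤ ((D.card : ℝ) * (1 + c)) ^ s := by
      refine pow_le_pow_left₀ (Finset.sum_nonneg fun x _ => (Real.exp_pos _).le) hsumexp s
    calc ((Finset.univ.filter P).card : ℝ) * Real.exp (L * (s * t'))
        = ∑ _f ∈ Finset.univ.filter P, Real.exp (L * (s * t')) := step1
      _ ≤ ∑ f ∈ Finset.univ.filter P, Real.exp (L * (s * μ - ∑ i, g ((f i : V)))) := step2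
      _ ≤ ∑ f : Fin s → {x // x ∈ D}, Real.exp (L * (s * μ - ∑ i, g ((f i : V)))) := step3
      _ = ∑ f : Fin s → {x // x ∈ D}, ∏ i, Real.exp (L * (μ - g ((f i : V)))) := step4
      _ = (∑ x ∈ D, Real.exp (L * (μ - g x))) ^ s := step5
      _ ≤ ((D.card : ℝ) * (1 + c)) ^ s := step6
  -- assemble the probability bound
  have hnpow : (0:ℝ) < (D.card : ℝ) ^ s := by positivity
  have hfin : samplePr D s P ≤ Real.exp ((s:ℝ) * c - L * (s * t')) := by
    rw [samplePr, hcount, div_le_iff₀ hnpow]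
    have hexpPos : (0:ℝ) < Real.exp (L * ((s:ℝ) * t')) := Real.exp_pos _
    have h7 : (1 + c) ^ s ≤ Real.exp ((s:ℝ) * c) := by
      calc (1 + c) ^ s ≤ Real.exp c ^ s :=
            pow_le_pow_left₀ (by linarith) (by linarith [Real.add_one_le_exp c]) s
        _ = Real.exp ((s:ℝ) * c) := by rw [← Real.exp_nat_mul]
    have h8 : ((Finset.univ.filter P).card : ℝ)
        ≤ ((D.card : ℝ) ^ s * Real.exp ((s:ℝ) * c)) / Real.exp (L * ((s:ℝ) * t')) := by
      rw [le_div_iff₀ hexpPos]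
      calc ((Finset.univ.filter P).card : ℝ) * Real.exp (L * ((s:ℝ) * t'))
          ≤ ((D.card : ℝ) * (1 + c)) ^ s := hchain
        _ = (D.card : ℝ) ^ s * (1 + c) ^ s := mul_pow _ _ s
        _ ≤ (D.card : ℝ) ^ s * Real.exp ((s:ℝ) * c) :=
            mul_le_mul_of_nonneg_left h7 (pow_nonneg hn.le s)
    calc ((Finset.univ.filter P).card : ℝ)
        ≤ ((D.card : ℝ) ^ s * Real.exp ((s:ℝ) * c)) / Real.exp (L * ((s:ℝ) * t')) := h8
      _ = Real.exp ((s:ℝ) * c - L * ((s:ℝ) * t')) * (D.card : ℝ) ^ s := by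
          rw [Real.exp_sub]
          ring
  have hexp : (s:ℝ) * c - L * ((s:ℝ) * t') ≤ -(2 * (s:ℝ) * β ^ 2 * m ^ 2) / M ^ 4 := by
    have hs0 : (0:ℝ) ≤ (s:ℝ) := Nat.cast_nonneg s
    have h := mul_le_mul_of_nonneg_left key hs0
    have e1 : (s:ℝ) * c - L * ((s:ℝ) * t')
        = -((s:ℝ) * (L * t' - (3/16) * L ^ 2 * M ^ 4)) := by rw [hc_def]; ring
    have e2 : -(2 * (s:ℝ) * β ^ 2 * m ^ 2) / M ^ 4
        = -((s:ℝ) * (2 * β ^ 2 * m ^ 2 / M ^ 4)) := by ring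
    rw [e1, e2]
    exact neg_le_neg h
  calc samplePr D s P ≤ Real.exp ((s:ℝ) * c - L * ((s:ℝ) * t')) := hfin
    _ ≤ Real.exp (-(2 * (s:ℝ) * β ^ 2 * m ^ 2) / M ^ 4) := Real.exp_le_exp.mpr hexp
end

section
/- Let (V,d) be a finite metric space with |V| = n ≥ 2 points and diameter at most M, D ⊆ V nonempty, k ≥ 1, α ≥ 1, β > 0, γ ≥ 0, 0 < θ < 1, and assume mean_avg(D,k) > 0. Let S = (X_1,…,X_s) be s independent uniform samples from D with s ≥ (M⁴ / (2·β²·(mean_avg(D,k))²))·(ln(1/θ) + k·ln n). Let ℂ be the set of all k-element subsets of V that are (α + 3β, γ)-bad solutions for the k-means problem on D. Then Pr[ ∃ C_b ∈ ℂ : cost^mean_avg(S, C_b) ≤ (α + β)·mean_avg(D,k) + γ ] ≤ θ. -/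
open Finset

lemma exp_neg_le_quadratic {y : ℝ} (hy : 0 ≤ y) :
    Real.exp (-y) ≤ 1 - y + y ^ 2 / 2 := by
  have h := Real.quadratic_le_exp_of_nonneg hy
  have h1 : Real.exp (-y) * Real.exp y = 1 := by
    rw [← Real.exp_add]; simp
  have h2 : (0:ℝ) < Real.exp y := Real.exp_pos y
  have h3 : (0:ℝ) < Real.exp (-y) := Real.exp_pos _
  nlinarith [sq_nonneg y, sq_nonneg (y ^ 2), sq_nonneg (y - 1)]

lemma chernoff_count {Ω : Type*} [Fintype Ω] (g : Ω → ℝ) (B : ℝ) (hB : 0 < B)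
    (hg0 : ∀ x, 0 ≤ g x) (hgB : ∀ x, g x ≤ B) (μ : ℝ)
    (hμ : ∑ x : Ω, g x = (Fintype.card Ω : ℝ) * μ)
    (s : ℕ) (t : ℝ) (ht : 0 < t) :
    ((Finset.univ.filter
        (fun f : Fin s → Ω => ∑ i, g (f i) ≤ (s : ℝ) * (μ - t))).card : ℝ)
      ≤ (Fintype.card Ω : ℝ) ^ s * Real.exp (-((s : ℝ) * t ^ 2) / (2 * B ^ 2)) := by
  classical
  have hB' : B ≠ 0 := ne_of_gt hB
  set l : ℝ := t / B ^ 2 with hl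
  have hl0 : 0 < l := div_pos ht (by positivity)
  set N : ℝ := (Fintype.card Ω : ℝ) with hN
  have hN0 : 0 ≤ N := Nat.cast_nonneg _
  set F := Finset.univ.filter
      (fun f : Fin s → Ω => ∑ i, g (f i) ≤ (s : ℝ) * (μ - t)) with hF
  have step1 : (F.card : ℝ)
      ≤ ∑ f : Fin s → Ω, Real.exp (l * ((s : ℝ) * (μ - t) - ∑ i, g (f i))) := by
    have e : (F.card : ℝ) = ∑ _f ∈ F, (1 : ℝ) := by simp
    rw [e]
    refine le_trans (Finset.sum_le_sum fun f hf => ?_)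
      (Finset.sum_le_sum_of_subset_of_nonneg (Finset.subset_univ F)
        (fun f _ _ => (Real.exp_pos _).le))
    have hf' : ∑ i, g (f i) ≤ (s : ℝ) * (μ - t) := (Finset.mem_filter.mp hf).2
    have : (0:ℝ) ≤ l * ((s : ℝ) * (μ - t) - ∑ i, g (f i)) :=
      mul_nonneg hl0.le (by linarith)
    linarith [Real.add_one_le_exp (l * ((s : ℝ) * (μ - t) - ∑ i, g (f i)))]
  have step2 : ∀ f : Fin s → Ω,
      Real.exp (l * ((s : ℝ) * (μ - t) - ∑ i, g (f i)))
        = Real.exp (l * ((s : ℝ) * (μ - t))) * ∏ i, Real.exp (-(l * g (f i))) := by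
    intro f
    rw [← Real.exp_sum, ← Real.exp_add]
    congr 1
    have : ∑ i, -(l * g (f i)) = -(l * ∑ i, g (f i)) := by
      rw [Finset.mul_sum, ← Finset.sum_neg_distrib]
    rw [this]; ring
  have step3 : ∑ f : Fin s → Ω, ∏ i, Real.exp (-(l * g (f i)))
      = (∑ x : Ω, Real.exp (-(l * g x))) ^ s := by
    rw [← Fintype.piFinset_univ,
      Finset.sum_prod_piFinset (Finset.univ : Finset Ω)
        (fun (_ : Fin s) (x : Ω) => Real.exp (-(l * g x)))]
    simp
  have step4 : ∑ x : Ω, Real.exp (-(l * g x))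
      ≤ N * Real.exp (-(l * μ) + l ^ 2 * B ^ 2 / 2) := by
    have h1 : ∑ x : Ω, Real.exp (-(l * g x))
        ≤ ∑ x : Ω, (1 - l * g x + (l * g x) ^ 2 / 2) :=
      Finset.sum_le_sum fun x _ => exp_neg_le_quadratic (mul_nonneg hl0.le (hg0 x))
    have e1 : ∑ x : Ω, (1 - l * g x + (l * g x) ^ 2 / 2)
        = N - l * (N * μ) + ∑ x : Ω, (l * g x) ^ 2 / 2 := by
      rw [Finset.sum_add_distrib, Finset.sum_sub_distrib, Finset.sum_const,
        ← Finset.mul_sum, hμ]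
      simp [hN]
    have e2 : ∑ x : Ω, (l * g x) ^ 2 / 2 ≤ N * (l ^ 2 * B ^ 2 / 2) := by
      calc ∑ x : Ω, (l * g x) ^ 2 / 2 ≤ ∑ _x : Ω, l ^ 2 * B ^ 2 / 2 :=
            Finset.sum_le_sum fun x _ => by
              have hgg : g x ^ 2 ≤ B ^ 2 := by nlinarith [hg0 x, hgB x]
              nlinarith [mul_le_mul_of_nonneg_left hgg (sq_nonneg l)]
        _ = N * (l ^ 2 * B ^ 2 / 2) := by
            rw [Finset.sum_const]; simp [hN]
    have h3 : 1 - l * μ + l ^ 2 * B ^ 2 / 2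
        ≤ Real.exp (-(l * μ) + l ^ 2 * B ^ 2 / 2) := by
      linarith [Real.add_one_le_exp (-(l * μ) + l ^ 2 * B ^ 2 / 2)]
    have h4 : ∑ x : Ω, (1 - l * g x + (l * g x) ^ 2 / 2)
        ≤ N * (1 - l * μ + l ^ 2 * B ^ 2 / 2) := by
      rw [e1]; nlinarith [e2]
    have h5 : N * (1 - l * μ + l ^ 2 * B ^ 2 / 2)
        ≤ N * Real.exp (-(l * μ) + l ^ 2 * B ^ 2 / 2) :=
      mul_le_mul_of_nonneg_left h3 hN0
    linarith
  calc (F.card : ℝ)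
      ≤ ∑ f : Fin s → Ω, Real.exp (l * ((s : ℝ) * (μ - t) - ∑ i, g (f i))) := step1
    _ = Real.exp (l * ((s : ℝ) * (μ - t))) * (∑ x : Ω, Real.exp (-(l * g x))) ^ s := by
        simp_rw [step2]; rw [← Finset.mul_sum, step3]
    _ ≤ Real.exp (l * ((s : ℝ) * (μ - t)))
          * (N * Real.exp (-(l * μ) + l ^ 2 * B ^ 2 / 2)) ^ s := by
        refine mul_le_mul_of_nonneg_left (pow_le_pow_left₀ ?_ step4 s) (Real.exp_pos _).le
        exact Finset.sum_nonneg fun x _ => (Real.exp_pos _).le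
    _ = N ^ s * (Real.exp (l * ((s : ℝ) * (μ - t)))
          * Real.exp ((s : ℝ) * (-(l * μ) + l ^ 2 * B ^ 2 / 2))) := by
        rw [mul_pow, ← Real.exp_nat_mul]; ring
    _ = N ^ s * Real.exp (-((s : ℝ) * t ^ 2) / (2 * B ^ 2)) := by
        rw [← Real.exp_add]; congr 1; rw [hl]; field_simp; ring

set_option maxHeartbeats 1000000 in
theorem no_bad_kmeans_solution_looks_good_on_sample
    {V : Type*} [MetricSpace V] [Fintype V]
    (hn : 2 ≤ Fintype.card V)
    (M : ℝ) (hdiam : ∀ u v : V, dist u v ≤ M)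
    (D : Finset V) (hD : D.Nonempty)
    (k : ℕ) (hk : 1 ≤ k)
    (α β γ θ : ℝ) (hα : 1 ≤ α) (hβ : 0 < β) (hγ : 0 ≤ γ)
    (hθ0 : 0 < θ) (hθ1 : θ < 1)
    (hpos : 0 < meanAvg V D k)
    (s : ℕ)
    (hs : (s : ℝ) ≥ M ^ 4 / (2 * β ^ 2 * (meanAvg V D k) ^ 2) *
      (Real.log (1 / θ) + k * Real.log (Fintype.card V))) :
    samplePr D s (fun f => ∃ Cb : Finset V, Cb.card = k ∧
        costMeanAvg D Cb > (α + 3 * β) * meanAvg V D k + γ ∧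
        sampleCostMean f Cb ≤ (α + β) * meanAvg V D k + γ) ≤ θ := by
  classical
  set m := meanAvg V D k with hm
  obtain ⟨u, v, huv⟩ := Fintype.exists_pair_of_one_lt_card
    (lt_of_lt_of_le one_lt_two hn)
  have hM : 0 < M := lt_of_lt_of_le (dist_pos.mpr huv) (hdiam u v)
  have hn1 : (1:ℝ) ≤ (Fintype.card V : ℝ) := by
    have : (1:ℕ) ≤ Fintype.card V := le_trans (by norm_num) hn
    exact_mod_cast this
  set L := Real.log (1 / θ) + k * Real.log (Fintype.card V) with hL
  have hlog1 : 0 < Real.log (1 / θ) := Real.log_pos (one_lt_one_div hθ0 hθ1)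
  have hlogn : 0 ≤ Real.log (Fintype.card V) := Real.log_nonneg hn1
  have hLpos : 0 < L := by
    have hk' : (0:ℝ) ≤ (k:ℝ) * Real.log (Fintype.card V) :=
      mul_nonneg (Nat.cast_nonneg k) hlogn
    rw [hL]; linarith
  have hb2 : (0:ℝ) < β ^ 2 := pow_pos hβ 2
  have hm2 : (0:ℝ) < m ^ 2 := pow_pos hpos 2
  have hc : (0:ℝ) < 2 * β ^ 2 * m ^ 2 := mul_pos (mul_pos two_pos hb2) hm2
  have hM4 : (0:ℝ) < M ^ 4 := pow_pos hM 4
  have hs0 : 0 < (s:ℝ) :=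
    lt_of_lt_of_le (mul_pos (div_pos hM4 hc) hLpos) hs
  set t := 2 * β * m with htdef
  have ht : 0 < t := by rw [htdef]; exact mul_pos (mul_pos two_pos hβ) hpos
  set P := fun f : Fin s → {x // x ∈ D} => ∃ Cb : Finset V, Cb.card = k ∧
        costMeanAvg D Cb > (α + 3 * β) * m + γ ∧
        sampleCostMean f Cb ≤ (α + β) * m + γ with hP
  have hDc : 0 < D.card := hD.card_pos
  have hden : (0:ℝ) < (D.card : ℝ) ^ s := by positivity
  set E := Real.exp (-((s:ℝ) * t ^ 2) / (2 * (M ^ 2) ^ 2)) with hE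
  -- union bound inclusion
  have hsub : Finset.univ.filter P ⊆ (Finset.univ.powersetCard k).biUnion
      (fun C => Finset.univ.filter (fun f : Fin s → {x // x ∈ D} =>
        ∑ i, Metric.infDist ((f i : V)) (C : Set V) ^ 2
          ≤ (s:ℝ) * (costMeanAvg D C - t))) := by
    intro f hf
    obtain ⟨Cb, hCk, hbad, hlow⟩ := (Finset.mem_filter.mp hf).2
    refine Finset.mem_biUnion.mpr ⟨Cb,
      Finset.mem_powersetCard.mpr ⟨Finset.subset_univ _, hCk⟩,
      Finset.mem_filter.mpr ⟨Finset.mem_univ _, ?_⟩⟩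
    simp only [sampleCostMean] at hlow
    rw [div_le_iff₀ hs0] at hlow
    have h2 : (α + β) * m + γ ≤ costMeanAvg D Cb - t := by
      have he : (α + 3 * β) * m = (α + β) * m + t := by rw [htdef]; ring
      linarith [hbad, he.ge, he.le]
    calc ∑ i, Metric.infDist ((f i : V)) (Cb : Set V) ^ 2
        ≤ ((α + β) * m + γ) * (s:ℝ) := hlow
      _ ≤ (s:ℝ) * (costMeanAvg D Cb - t) := by
          rw [mul_comm]; exact mul_le_mul_of_nonneg_left h2 hs0.le
  -- per-clustering Chernoff bound
  have hCbound : ∀ C ∈ Finset.univ.powersetCard k,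
      ((Finset.univ.filter (fun f : Fin s → {x // x ∈ D} =>
        ∑ i, Metric.infDist ((f i : V)) (C : Set V) ^ 2
          ≤ (s:ℝ) * (costMeanAvg D C - t))).card : ℝ)
      ≤ (D.card : ℝ) ^ s * E := by
    intro C hC
    have hCk : C.card = k := (Finset.mem_powersetCard.mp hC).2
    obtain ⟨c, hc'⟩ : C.Nonempty := Finset.card_pos.mp (by omega)
    have hg0 : ∀ x : {x // x ∈ D},
        0 ≤ Metric.infDist (x : V) (C : Set V) ^ 2 := fun x => sq_nonneg _
    have hgB : ∀ x : {x // x ∈ D},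
        Metric.infDist (x : V) (C : Set V) ^ 2 ≤ M ^ 2 := by
      intro x
      have h1 : Metric.infDist (x : V) (C : Set V) ≤ M :=
        le_trans (Metric.infDist_le_dist_of_mem
          (by exact_mod_cast hc' : (c : V) ∈ (C : Set V))) (hdiam _ c)
      have h0 : 0 ≤ Metric.infDist (x : V) (C : Set V) := Metric.infDist_nonneg
      nlinarith
    have hD0 : ((D.card : ℝ)) ≠ 0 := ne_of_gt (by exact_mod_cast hDc)
    have hμ : ∑ x : {x // x ∈ D}, Metric.infDist (x : V) (C : Set V) ^ 2
        = (Fintype.card {x // x ∈ D} : ℝ) * costMeanAvg D C := by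
      rw [Fintype.card_coe,
        Finset.sum_coe_sort D (fun x => Metric.infDist x (C : Set V) ^ 2)]
      simp only [costMeanAvg]
      field_simp
    have hch := chernoff_count
      (fun x : {x // x ∈ D} => Metric.infDist (x : V) (C : Set V) ^ 2)
      (M ^ 2) (by positivity) hg0 hgB (costMeanAvg D C) hμ s t ht
    rw [Fintype.card_coe] at hch
    exact hch
  -- counting
  have hcount : (Nat.card {f : Fin s → {x // x ∈ D} // P f} : ℝ)
      ≤ (Fintype.card V : ℝ) ^ k * E * (D.card : ℝ) ^ s := by
    have h1 : (Nat.card {f : Fin s → {x // x ∈ D} // P f})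
        = (Finset.univ.filter P).card := by
      rw [Nat.card_eq_fintype_card, Fintype.card_subtype]
    rw [h1]
    have h2 : ((Finset.univ.filter P).card : ℕ)
        ≤ ∑ C ∈ Finset.univ.powersetCard k,
            (Finset.univ.filter (fun f : Fin s → {x // x ∈ D} =>
              ∑ i, Metric.infDist ((f i : V)) (C : Set V) ^ 2
                ≤ (s:ℝ) * (costMeanAvg D C - t))).card :=
      le_trans (Finset.card_le_card hsub) Finset.card_biUnion_le
    have h3 : ((Finset.univ.filter P).card : ℝ)
        ≤ ∑ C ∈ Finset.univ.powersetCard k,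
            ((Finset.univ.filter (fun f : Fin s → {x // x ∈ D} =>
              ∑ i, Metric.infDist ((f i : V)) (C : Set V) ^ 2
                ≤ (s:ℝ) * (costMeanAvg D C - t))).card : ℝ) := by
      exact_mod_cast h2
    have hchoose : ((Fintype.card V).choose k : ℝ) ≤ (Fintype.card V : ℝ) ^ k := by
      exact_mod_cast Nat.choose_le_pow (Fintype.card V) k
    have hEpos : (0:ℝ) < E := Real.exp_pos _
    calc ((Finset.univ.filter P).card : ℝ)
        ≤ ∑ C ∈ Finset.univ.powersetCard k,
            ((Finset.univ.filter (fun f : Fin s → {x // x ∈ D} =>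
              ∑ i, Metric.infDist ((f i : V)) (C : Set V) ^ 2
                ≤ (s:ℝ) * (costMeanAvg D C - t))).card : ℝ) := h3
      _ ≤ ∑ _C ∈ Finset.univ.powersetCard k, (D.card : ℝ) ^ s * E :=
          Finset.sum_le_sum hCbound
      _ = ((Fintype.card V).choose k : ℝ) * ((D.card : ℝ) ^ s * E) := by
          rw [Finset.sum_const, Finset.card_powersetCard, Finset.card_univ]
          simp [mul_comm]
      _ ≤ (Fintype.card V : ℝ) ^ k * ((D.card : ℝ) ^ s * E) :=
          mul_le_mul_of_nonneg_right hchoose (by positivity)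
      _ = (Fintype.card V : ℝ) ^ k * E * (D.card : ℝ) ^ s := by ring
  -- the exponential bound
  have hfinal : (Fintype.card V : ℝ) ^ k * E ≤ θ := by
    have hs' : M ^ 4 * L ≤ (s:ℝ) * (2 * β ^ 2 * m ^ 2) := by
      rw [ge_iff_le, div_mul_eq_mul_div, div_le_iff₀ hc] at hs
      exact hs
    have ht2 : t ^ 2 = 4 * β ^ 2 * m ^ 2 := by rw [htdef]; ring
    have hexp : -((s:ℝ) * t ^ 2) / (2 * (M ^ 2) ^ 2) ≤ -L := by
      rw [neg_div, neg_le_neg_iff, le_div_iff₀ (by positivity : (0:ℝ) < 2 * (M ^ 2) ^ 2)]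
      have he : (s:ℝ) * t ^ 2 = 2 * ((s:ℝ) * (2 * β ^ 2 * m ^ 2)) := by rw [ht2]; ring
      have he2 : L * (2 * (M ^ 2) ^ 2) = 2 * (M ^ 4 * L) := by ring
      rw [he, he2]
      linarith [hs']
    have h2 : E ≤ Real.exp (-L) := Real.exp_le_exp.mpr hexp
    have hnpos : (0:ℝ) < (Fintype.card V : ℝ) := lt_of_lt_of_le one_pos hn1
    have h3 : Real.exp (-L) = θ / (Fintype.card V : ℝ) ^ k := by
      rw [hL, neg_add, Real.exp_add, one_div, Real.log_inv, neg_neg, Real.exp_log hθ0,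
        Real.exp_neg, Real.exp_nat_mul, Real.exp_log hnpos, div_eq_mul_inv]
    have hnk : (0:ℝ) < (Fintype.card V : ℝ) ^ k := by positivity
    calc (Fintype.card V : ℝ) ^ k * E
        ≤ (Fintype.card V : ℝ) ^ k * (θ / (Fintype.card V : ℝ) ^ k) := by
          rw [← h3]; exact mul_le_mul_of_nonneg_left h2 hnk.le
      _ = θ := by field_simp
  -- conclude
  show samplePr D s P ≤ θ
  unfold samplePr
  rw [div_le_iff₀ hden]
  calc (Nat.card {f : Fin s → {x // x ∈ D} // P f} : ℝ)
      ≤ (Fintype.card V : ℝ) ^ k * E * (D.card : ℝ) ^ s := hcount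
    _ ≤ θ * (D.card : ℝ) ^ s := mul_le_mul_of_nonneg_right hfinal hden.le
end
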